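/- Let k have characteristic 3. The tensor product L_3 ⊗ L_2 decomposes as a direct sum of two submodules each isomorphic to L_3, generated respectively by v_1⊗w_1 and v_2⊗w_1. -/

import Mathlib

/-!
Write `e(i, j) = v_{i+1} ⊗ w_{j+1}`. Under `t`, the orbit of `e(0, 0)` is
`e(1, 0) + e(0, 1)`, `e(2, 0) + 2 e(1, 1)`, `3 e(2, 1)`, and that of `e(1, 0)` is
`e(2, 0) + e(1, 1)`, `2 e(2, 1)`, `0`. In characteristic 3 both orbits die after three steps, so
each cyclic submodule has dimension at most 3; since 2 is invertible, the six orbit vectors span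
all of the 6-dimensional `L_3 ⊗ L_2`, and counting dimensions forces both ranks to be 3 and the
sum to be direct.
-/

open TensorProduct

/-- The nilpotent Jordan block action `t` on `L_n = k^n`: `t·v_j = v_{j+1}`, `t·v_n = 0`
(indices shifted so that `v_j` is the basis vector at index `j-1`). -/
noncomputable def jordanT (k : Type*) [Field k] (n : ℕ) : (Fin n → k) →ₗ[k] (Fin n → k) :=
  Matrix.mulVecLin (Matrix.of fun i j : Fin n => if (i : ℕ) = (j : ℕ) + 1 then (1 : k) else 0)

/-- The Leibniz-rule action of `t` on `L_a ⊗ L_b`: `t·(v⊗w) = (t·v)⊗w + v⊗(t·w)`. -/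
noncomputable def tensorT (k : Type*) [Field k] (a b : ℕ) :
    ((Fin a → k) ⊗[k] (Fin b → k)) →ₗ[k] ((Fin a → k) ⊗[k] (Fin b → k)) :=
  LinearMap.rTensor (Fin b → k) (jordanT k a) + LinearMap.lTensor (Fin a → k) (jordanT k b)

/-- The cyclic submodule generated by `u` under the operator `T`. -/
noncomputable def cyclic {k : Type*} [Field k] {V : Type*} [AddCommGroup V] [Module k V]
    (T : V →ₗ[k] V) (u : V) : Submodule k V :=
  Submodule.span k (Set.range fun j : ℕ => (T ^ j) u)

section

variable {k : Type*} [Field k]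

theorem jordanT_single {n : ℕ} (i : Fin n) :
    jordanT k n (Pi.single i 1) = if h : (i : ℕ) + 1 < n then Pi.single ⟨i + 1, h⟩ 1 else 0 := by
  ext r
  split_ifs with h
  · simp [jordanT, Pi.single_apply, Fin.ext_iff]
  · simpa [jordanT] using fun hr : (r : ℕ) = i + 1 => h (hr ▸ r.isLt)

@[simp]
theorem tensorT_tmul {a b : ℕ} (x : Fin a → k) (y : Fin b → k) :
    tensorT k a b (x ⊗ₜ y) = jordanT k a x ⊗ₜ y + x ⊗ₜ jordanT k b y := by
  simp [tensorT]

section Cyclic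

variable {V : Type*} [AddCommGroup V] [Module k V]

theorem pow_apply_mem_cyclic (T : V →ₗ[k] V) (u : V) (j : ℕ) : (T ^ j) u ∈ cyclic T u :=
  Submodule.subset_span ⟨j, rfl⟩

theorem cyclic_eq_span_of_pow_apply_eq_zero {T : V →ₗ[k] V} {u : V} {n : ℕ}
    (h : (T ^ n) u = 0) :
    cyclic T u = Submodule.span k (Set.range fun j : Fin n => (T ^ (j : ℕ)) u) := by
  refine le_antisymm (Submodule.span_le.2 ?_) (Submodule.span_mono ?_)
  · rintro _ ⟨j, rfl⟩
    rcases lt_or_ge j n with hj | hj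
    · exact Submodule.subset_span ⟨⟨j, hj⟩, rfl⟩
    · obtain ⟨m, rfl⟩ := Nat.exists_eq_add_of_le' hj
      simp [pow_add, Module.End.mul_apply, h]
  · rintro _ ⟨j, rfl⟩
    exact ⟨j, rfl⟩

theorem finrank_cyclic_le_of_pow_apply_eq_zero {T : V →ₗ[k] V} {u : V} {n : ℕ}
    (h : (T ^ n) u = 0) : Module.finrank k (cyclic T u) ≤ n := by
  rw [cyclic_eq_span_of_pow_apply_eq_zero h]
  exact (finrank_range_le_card _).trans_eq (Fintype.card_fin n)

end Cyclic

theorem finrank_eq_and_disjoint_of_sup_eq_top {V : Type*} [AddCommGroup V] [Module k V]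
    [FiniteDimensional k V] {S₁ S₂ : Submodule k V} {a b : ℕ} (hsup : S₁ ⊔ S₂ = ⊤)
    (h₁ : Module.finrank k S₁ ≤ a) (h₂ : Module.finrank k S₂ ≤ b)
    (hV : Module.finrank k V = a + b) :
    Module.finrank k S₁ = a ∧ Module.finrank k S₂ = b ∧ Disjoint S₁ S₂ := by
  have key := Submodule.finrank_sup_add_finrank_inf_eq S₁ S₂
  rw [hsup, finrank_top, hV] at key
  exact ⟨by omega, by omega, disjoint_iff.2 (Submodule.finrank_eq_zero.1 (by omega))⟩

theorem eq_top_of_single_tmul_single_mem {ι κ : Type*} [Finite ι] [Finite κ] [DecidableEq ι]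
    [DecidableEq κ] {S : Submodule k ((ι → k) ⊗[k] (κ → k))}
    (h : ∀ i j, (Pi.single i 1 : ι → k) ⊗ₜ[k] (Pi.single j 1 : κ → k) ∈ S) : S = ⊤ := by
  rw [eq_top_iff, ← ((Pi.basisFun k ι).tensorProduct (Pi.basisFun k κ)).span_eq,
    Submodule.span_le]
  rintro _ ⟨⟨i, j⟩, rfl⟩
  simpa using h i j

section L3L2

local notation "e(" i ", " j ")" =>
  ((Pi.single i 1 : Fin 3 → k) ⊗ₜ[k] (Pi.single j 1 : Fin 2 → k))

theorem tensorT_orbit_v₁w₁ :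
    tensorT k 3 2 e(0, 0) = e(1, 0) + e(0, 1) ∧
    (tensorT k 3 2 ^ 2) e(0, 0) = e(2, 0) + (2 : k) • e(1, 1) ∧
    (tensorT k 3 2 ^ 3) e(0, 0) = (3 : k) • e(2, 1) := by
  refine ⟨by simp [jordanT_single], by simp [pow_succ, jordanT_single, two_smul, add_assoc], ?_⟩
  simp [pow_succ, jordanT_single, add_smul, two_smul, show (3 : k) = 2 + 1 by norm_num]

theorem tensorT_orbit_v₂w₁ :
    tensorT k 3 2 e(1, 0) = e(2, 0) + e(1, 1) ∧
    (tensorT k 3 2 ^ 2) e(1, 0) = (2 : k) • e(2, 1) ∧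
    (tensorT k 3 2 ^ 3) e(1, 0) = 0 := by
  refine ⟨by simp [jordanT_single], ?_, by simp [pow_succ, jordanT_single]⟩
  simp [pow_succ, jordanT_single, two_smul]

theorem cyclic_sup_cyclic_eq_top (h2 : (2 : k) ≠ 0) :
    cyclic (tensorT k 3 2) e(0, 0) ⊔ cyclic (tensorT k 3 2) e(1, 0) = ⊤ := by
  set W := cyclic (tensorT k 3 2) e(0, 0) ⊔ cyclic (tensorT k 3 2) e(1, 0)
  obtain ⟨h₁, h₂, -⟩ := tensorT_orbit_v₁w₁ (k := k)
  obtain ⟨h₃, h₄, -⟩ := tensorT_orbit_v₂w₁ (k := k)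
  have mem₁ (j : ℕ) : (tensorT k 3 2 ^ j) e(0, 0) ∈ W :=
    Submodule.mem_sup_left (pow_apply_mem_cyclic _ _ j)
  have mem₂ (j : ℕ) : (tensorT k 3 2 ^ j) e(1, 0) ∈ W :=
    Submodule.mem_sup_right (pow_apply_mem_cyclic _ _ j)
  have e00 : e(0, 0) ∈ W := by simpa using mem₁ 0
  have e10 : e(1, 0) ∈ W := by simpa using mem₂ 0
  have e01 : e(0, 1) ∈ W := by simpa [h₁] using W.sub_mem (mem₁ 1) e10
  have e11 : e(1, 1) ∈ W := by
    convert W.sub_mem (mem₁ 2) (mem₂ 1) using 1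
    rw [h₂, pow_one, h₃]
    module
  have e20 : e(2, 0) ∈ W := by simpa [h₃] using W.sub_mem (mem₂ 1) e11
  have e21 : e(2, 1) ∈ W := by simpa [h₄, h2] using W.smul_mem (2 : k)⁻¹ (mem₂ 2)
  refine eq_top_of_single_tmul_single_mem fun i j => ?_
  fin_cases i <;> fin_cases j <;> assumption

end L3L2

end

/-- For `char k = 3`, `L_3 ⊗ L_2` decomposes as a direct sum of two submodules each
isomorphic to `L_3`, generated respectively by `v_1⊗w_1` and `v_2⊗w_1`. -/
theorem stmt8 {k : Type*} [Field k] [CharP k 3] :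
    let T := tensorT k 3 2
    let v : Fin 3 → (Fin 3 → k) := fun i => Pi.single i 1
    let w : Fin 2 → (Fin 2 → k) := fun i => Pi.single i 1
    let S₁ := cyclic T (v 0 ⊗ₜ[k] w 0)
    let S₂ := cyclic T (v 1 ⊗ₜ[k] w 0)
    Module.finrank k S₁ = 3 ∧ Module.finrank k S₂ = 3 ∧
    Disjoint S₁ S₂ ∧ S₁ ⊔ S₂ = ⊤ := by
  intro T v w S₁ S₂
  have h3 : (3 : k) = 0 := by exact_mod_cast CharP.cast_eq_zero k 3
  have h2 : (2 : k) ≠ 0 := fun h => one_ne_zero (by linear_combination h3 - h : (1 : k) = 0)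
  have hsup : S₁ ⊔ S₂ = ⊤ := cyclic_sup_cyclic_eq_top h2
  have hS₁ : Module.finrank k S₁ ≤ 3 := finrank_cyclic_le_of_pow_apply_eq_zero <| by
    rw [tensorT_orbit_v₁w₁.2.2, h3, zero_smul]
  have hS₂ : Module.finrank k S₂ ≤ 3 :=
    finrank_cyclic_le_of_pow_apply_eq_zero tensorT_orbit_v₂w₁.2.2
  obtain ⟨h₁, h₂, hdisj⟩ := finrank_eq_and_disjoint_of_sup_eq_top hsup hS₁ hS₂
    (by simp [Module.finrank_tensorProduct])
  exact ⟨h₁, h₂, hdisj, hsup⟩
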